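/- arXiv:2006.05445 — 3 statements merged into one kernel-verified Lean document; each statement's English description precedes it below -/
import Mathlib

section
/- The matrix exponential mapping Q(Y) = exp(Y)/tr(exp(Y)) is 1-Lipschitz from the spectral norm to the nuclear norm on the space of traceless Hermitian matrices: ‖Q(Y) - Q(Y')‖₁ ≤ ‖Y - Y'‖_∞ for all Hermitian Y, Y' with tr Y = tr Y' = 0. -/
open scoped BigOperators ComplexOrder

/-- Von Neumann entropy h(Q) = tr(Q log Q) = sum of eigenvalue entropies (0 log 0 = 0). -/
noncomputable def vnEntropy {M : ℕ} (Q : Matrix (Fin M) (Fin M) ℂ) : ℝ :=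
  if hQ : Q.IsHermitian then ∑ i, hQ.eigenvalues i * Real.log (hQ.eigenvalues i) else 0

/-- Nuclear (trace) norm of a Hermitian matrix: sum of absolute values of eigenvalues. -/
noncomputable def nuclearNorm {M : ℕ} (Q : Matrix (Fin M) (Fin M) ℂ) : ℝ :=
  if hQ : Q.IsHermitian then ∑ i, |hQ.eigenvalues i| else 0

/-- Spectral norm of a Hermitian matrix: maximum absolute eigenvalue. -/
noncomputable def spectralNormHerm {M : ℕ} (Q : Matrix (Fin M) (Fin M) ℂ) : ℝ :=
  if hQ : Q.IsHermitian then ⨆ i, |hQ.eigenvalues i| else 0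

/-- The matrix exponential mapping Q(Y) = exp(Y)/tr(exp(Y)). -/
noncomputable def expMap {M : ℕ} (Y : Matrix (Fin M) (Fin M) ℂ) : Matrix (Fin M) (Fin M) ℂ :=
  ((NormedSpace.exp Y).trace)⁻¹ • NormedSpace.exp Y

/-!
Write `ρ = Q(Y) = V diag(p) V*` and `σ = Q(Y') = W diag(s) W*`, where `p`, `s` are the softmax
of the eigenvalues `λ`, `μ` of `Y`, `Y'`. The numbers `m i j = |(V* W) i j|²` form a doubly
stochastic matrix, and `Re tr((Y - Y')(ρ - σ)) = ∑ m i j (λ i - μ j)(p i - s j)`; since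
`λ i = log p i + const`, the constants cancel and this is `∑ m i j (log p i - log s j)(p i - s j)`,
which is at least `2 ∑ m i j (p i - s j)² / (p i + s j)` termwise. Pairing `ρ - σ` with its sign
matrix and applying Cauchy–Schwarz shows this last quantity dominates `‖ρ - σ‖₁²`, while Hölder
bounds `Re tr((Y - Y')(ρ - σ))` by `‖Y - Y'‖_∞ ‖ρ - σ‖₁`.
-/

open Complex (normSq)
open ComplexConjugate

namespace Real

lemma two_mul_sub_one_div_add_one_le_log {x : ℝ} (hx : 1 ≤ x) :
    2 * (x - 1) / (x + 1) ≤ log x := by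
  let f : ℝ → ℝ := fun y => log y - 2 * (y - 1) / (y + 1)
  have hf' : ∀ y, 0 < y → HasDerivAt f ((y - 1) ^ 2 / (y * (y + 1) ^ 2)) y := by
    intro y hy
    refine ((hasDerivAt_log hy.ne').sub
      ((((hasDerivAt_id y).sub_const 1).const_mul 2).div ((hasDerivAt_id y).add_const 1)
        (by positivity))).congr_deriv ?_
    simp only [id]
    field_simp
    ring
  have hmono : MonotoneOn f (Set.Ici 1) := by
    refine monotoneOn_of_hasDerivWithinAt_nonneg (convex_Ici 1)
      (fun y hy => (hf' y (zero_lt_one.trans_le hy)).continuousAt.continuousWithinAt)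
      (fun y hy => (hf' y ?_).hasDerivWithinAt) (fun y hy => ?_)
    all_goals rw [interior_Ici] at hy
    · exact zero_lt_one.trans hy
    · have : 0 < y := zero_lt_one.trans hy
      positivity
  simpa [f] using hmono Set.self_mem_Ici hx hx

lemma two_mul_sq_div_add_le_log_sub_mul_sub {p s : ℝ} (hp : 0 < p) (hs : 0 < s) :
    2 * ((p - s) ^ 2 / (p + s)) ≤ (log p - log s) * (p - s) := by
  wlog hsp : s ≤ p generalizing p s
  · convert this hs hp (le_of_not_ge hsp) using 1 <;> ring_nf
  have h := two_mul_sub_one_div_add_one_le_log ((one_le_div hs).2 hsp)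
  rw [log_div hp.ne' hs.ne'] at h
  calc 2 * ((p - s) ^ 2 / (p + s)) = 2 * (p / s - 1) / (p / s + 1) * (p - s) := by
        field_simp
    _ ≤ _ := mul_le_mul_of_nonneg_right h (sub_nonneg.2 hsp)

end Real

noncomputable def softmax {n : Type*} [Fintype n] (a : n → ℝ) (i : n) : ℝ :=
  Real.exp (a i) / ∑ k, Real.exp (a k)

section Softmax

variable {n : Type*} [Fintype n] (a : n → ℝ)

lemma sum_exp_pos (i : n) : 0 < ∑ k, Real.exp (a k) :=
  Finset.sum_pos (fun _ _ => Real.exp_pos _) ⟨i, Finset.mem_univ _⟩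

lemma softmax_pos (i : n) : 0 < softmax a i :=
  div_pos (Real.exp_pos _) (sum_exp_pos a i)

lemma sum_softmax [Nonempty n] : ∑ i, softmax a i = 1 := by
  simp only [softmax, ← Finset.sum_div]
  exact div_self (sum_exp_pos a (Classical.arbitrary n)).ne'

lemma log_softmax (i : n) : Real.log (softmax a i) = a i - Real.log (∑ k, Real.exp (a k)) := by
  rw [softmax, Real.log_div (Real.exp_pos _).ne' (sum_exp_pos a i).ne', Real.log_exp]

end Softmax

namespace Matrix

variable {n : Type*} [Fintype n]

lemma re_mul_star_apply_self (H : Matrix n n ℂ) (i : n) :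
    ((H * star H) i i).re = ∑ j, normSq (H i j) := by
  simp [mul_apply, Complex.mul_conj]

lemma re_star_mul_apply_self (H : Matrix n n ℂ) (j : n) :
    ((star H * H) j j).re = ∑ i, normSq (H i j) := by
  simp [mul_apply, mul_comm _ (H _ j), Complex.mul_conj]

lemma sq_sum_sum_re_conj_mul_mul_sub_le {G H : Matrix n n ℂ} {p s : n → ℝ}
    (hp : ∀ i, 0 < p i) (hs : ∀ j, 0 < s j) (hp1 : ∑ i, p i = 1) (hs1 : ∑ j, s j = 1)
    (hrow : ∀ i, ∑ j, normSq (H i j) ≤ 1) (hcol : ∀ j, ∑ i, normSq (H i j) ≤ 1) :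
    (∑ i, ∑ j, (conj (G i j) * H i j).re * (p i - s j)) ^ 2 ≤
      2 * ∑ i, ∑ j, normSq (G i j) * ((p i - s j) ^ 2 / (p i + s j)) := by
  have hweight : ∑ i, ∑ j, normSq (H i j) * (p i + s j) ≤ 2 := by
    calc ∑ i, ∑ j, normSq (H i j) * (p i + s j)
        = ∑ i, (∑ j, normSq (H i j)) * p i + ∑ j, (∑ i, normSq (H i j)) * s j := by
          simp only [mul_add, Finset.sum_add_distrib, Finset.sum_mul]
          rw [Finset.sum_comm (f := fun i j => normSq (H i j) * s j)]
      _ ≤ ∑ i, 1 * p i + ∑ j, 1 * s j := by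
          gcongr with i _ j _
          exacts [(hp i).le, hrow i, (hs j).le, hcol j]
      _ = 2 := by simp only [one_mul, hp1, hs1]; norm_num
  have hpoint : ∀ i j, ((conj (G i j) * H i j).re * (p i - s j)) ^ 2 ≤
      normSq (G i j) * ((p i - s j) ^ 2 / (p i + s j)) * (normSq (H i j) * (p i + s j)) := by
    intro i j
    have hps := add_pos (hp i) (hs j)
    have hre := Complex.re_sq_le_normSq (conj (G i j) * H i j)
    rw [Complex.normSq_mul, Complex.normSq_conj] at hre
    calc ((conj (G i j) * H i j).re * (p i - s j)) ^ 2
        = (conj (G i j) * H i j).re * (conj (G i j) * H i j).re * (p i - s j) ^ 2 := by ring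
      _ ≤ normSq (G i j) * normSq (H i j) * (p i - s j) ^ 2 :=
          mul_le_mul_of_nonneg_right hre (sq_nonneg _)
      _ = _ := by field_simp
  have hF : ∀ i j, 0 ≤ normSq (G i j) * ((p i - s j) ^ 2 / (p i + s j)) := fun i j =>
    mul_nonneg (Complex.normSq_nonneg _) (div_nonneg (sq_nonneg _) (add_pos (hp i) (hs j)).le)
  have hCS := Finset.sum_sq_le_sum_mul_sum_of_sq_le_mul (Finset.univ ×ˢ Finset.univ)
    (fun z _ => hF z.1 z.2)
    (fun z _ => mul_nonneg (Complex.normSq_nonneg _) (add_pos (hp z.1) (hs z.2)).le)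
    (fun z _ => hpoint z.1 z.2)
  simp only [Finset.sum_product] at hCS
  exact hCS.trans ((mul_le_mul_of_nonneg_left hweight
    (Finset.sum_nonneg fun i _ => Finset.sum_nonneg fun j _ => hF i j)).trans_eq (mul_comm _ _))

variable [DecidableEq n]

lemma sum_sum_mul_left_of_mem_doublyStochastic {m : Matrix n n ℝ}
    (hm : m ∈ doublyStochastic ℝ n) (x : n → ℝ) : ∑ i, ∑ j, m i j * x i = ∑ i, x i := by
  simp only [← Finset.sum_mul, sum_row_of_mem_doublyStochastic hm, one_mul]

lemma sum_sum_mul_right_of_mem_doublyStochastic {m : Matrix n n ℝ}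
    (hm : m ∈ doublyStochastic ℝ n) (y : n → ℝ) : ∑ i, ∑ j, m i j * y j = ∑ j, y j := by
  rw [Finset.sum_comm]
  simp only [← Finset.sum_mul, sum_col_of_mem_doublyStochastic hm, one_mul]

lemma sum_sum_mul_sub_of_mem_doublyStochastic {m : Matrix n n ℝ}
    (hm : m ∈ doublyStochastic ℝ n) (x y : n → ℝ) :
    ∑ i, ∑ j, m i j * (x i - y j) = ∑ i, x i - ∑ j, y j := by
  simp only [mul_sub, Finset.sum_sub_distrib, sum_sum_mul_left_of_mem_doublyStochastic hm,
    sum_sum_mul_right_of_mem_doublyStochastic hm]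

lemma sum_sum_mul_log_softmax_sub [Nonempty n] {m : Matrix n n ℝ}
    (hm : m ∈ doublyStochastic ℝ n) (a b : n → ℝ) :
    ∑ i, ∑ j, m i j * ((Real.log (softmax a i) - Real.log (softmax b j)) *
        (softmax a i - softmax b j)) =
      ∑ i, ∑ j, m i j * ((a i - b j) * (softmax a i - softmax b j)) := by
  set c := Real.log (∑ k, Real.exp (a k)) - Real.log (∑ k, Real.exp (b k))
  have hshift : ∀ i j, m i j * ((Real.log (softmax a i) - Real.log (softmax b j)) *
      (softmax a i - softmax b j)) = m i j * ((a i - b j) * (softmax a i - softmax b j)) -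
        c * (m i j * (softmax a i - softmax b j)) := by
    intro i j
    rw [log_softmax, log_softmax]
    ring
  simp only [hshift, Finset.sum_sub_distrib, ← Finset.mul_sum,
    sum_sum_mul_sub_of_mem_doublyStochastic hm, sum_softmax, sub_self, mul_zero, sub_zero]

lemma map_normSq_mem_doublyStochastic {P : Matrix n n ℂ} (hP : P ∈ unitary (Matrix n n ℂ)) :
    P.map normSq ∈ doublyStochastic ℝ n := by
  refine mem_doublyStochastic_iff_sum.2 ⟨fun i j => Complex.normSq_nonneg _, fun i => ?_,
    fun j => ?_⟩
  · simpa [Unitary.mul_star_self_of_mem hP] using (re_mul_star_apply_self P i).symm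
  · simpa [Unitary.star_mul_self_of_mem hP] using (re_star_mul_apply_self P j).symm

noncomputable def conjDiagonal (V : Matrix n n ℂ) (a : n → ℝ) : Matrix n n ℂ :=
  V * diagonal (fun i => (a i : ℂ)) * star V

lemma IsHermitian.eq_conjDiagonal {A : Matrix n n ℂ} (hA : A.IsHermitian) :
    A = conjDiagonal hA.eigenvectorUnitary hA.eigenvalues := by
  conv_lhs => rw [hA.spectral_theorem, Unitary.conjStarAlgAut_apply]
  rfl

lemma isHermitian_conjDiagonal (V : Matrix n n ℂ) (a : n → ℝ) :
    (conjDiagonal V a).IsHermitian :=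
  isHermitian_mul_mul_conjTranspose V
    (isHermitian_diagonal_iff.2 fun i => isSelfAdjoint_iff.2 (Complex.conj_ofReal (a i)))

lemma conjDiagonal_mul_conjDiagonal {V : Matrix n n ℂ} (hV : star V * V = 1) (a b : n → ℝ) :
    conjDiagonal V a * conjDiagonal V b = conjDiagonal V (a * b) := by
  simp only [conjDiagonal, Matrix.mul_assoc]
  rw [← Matrix.mul_assoc (star V), hV, Matrix.one_mul, ← Matrix.mul_assoc (diagonal _),
    diagonal_mul_diagonal]
  simp

lemma star_mul_conjDiagonal_mul (P V : Matrix n n ℂ) (a : n → ℝ) :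
    star P * conjDiagonal V a * P = conjDiagonal (star P * V) a := by
  simp only [conjDiagonal, star_mul, star_star, Matrix.mul_assoc]

lemma re_conjDiagonal_apply_self (V : Matrix n n ℂ) (a : n → ℝ) (i : n) :
    (conjDiagonal V a i i).re = ∑ k, a k * normSq (V i k) := by
  rw [conjDiagonal, mul_apply, Complex.re_sum]
  simp only [mul_diagonal, star_apply]
  refine Finset.sum_congr rfl fun k _ => ?_
  rw [mul_right_comm, Complex.star_def, Complex.mul_conj, ← Complex.ofReal_mul,
    Complex.ofReal_re, mul_comm]

lemma trace_conjDiagonal_mul (V : Matrix n n ℂ) (a : n → ℝ) (B : Matrix n n ℂ) :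
    (conjDiagonal V a * B).trace = ∑ i, (a i : ℂ) * (star V * B * V) i i := by
  rw [conjDiagonal, Matrix.mul_assoc, trace_mul_comm, ← Matrix.mul_assoc]
  simp [trace, mul_comm]

lemma re_trace_conjDiagonal_mul_conjDiagonal (V W : Matrix n n ℂ) (a b : n → ℝ) :
    (conjDiagonal V a * conjDiagonal W b).trace.re =
      ∑ i, ∑ j, a i * b j * normSq ((star V * W) i j) := by
  rw [trace_conjDiagonal_mul, star_mul_conjDiagonal_mul, Complex.re_sum]
  simp_rw [Complex.re_ofReal_mul, re_conjDiagonal_apply_self, Finset.mul_sum, mul_assoc]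

lemma trace_conjDiagonal {V : Matrix n n ℂ} (hV : star V * V = 1) (a : n → ℝ) :
    (conjDiagonal V a).trace = ∑ i, (a i : ℂ) := by
  rw [conjDiagonal, trace_mul_cycle, hV, Matrix.one_mul, trace_diagonal]

lemma re_trace_conjDiagonal_mul_conjDiagonal_self {V : Matrix n n ℂ} (hV : star V * V = 1)
    (a b : n → ℝ) : (conjDiagonal V a * conjDiagonal V b).trace.re = ∑ i, a i * b i := by
  simp [conjDiagonal_mul_conjDiagonal hV, trace_conjDiagonal hV]

lemma re_conjDiagonal_apply_self_le_one {P : Matrix n n ℂ} (hP : P ∈ unitary (Matrix n n ℂ))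
    {c : n → ℝ} (hc : ∀ k, c k ≤ 1) (i : n) : (conjDiagonal P c i i).re ≤ 1 := by
  rw [re_conjDiagonal_apply_self]
  calc ∑ k, c k * normSq (P i k) ≤ ∑ k, normSq (P i k) :=
        Finset.sum_le_sum fun k _ => mul_le_of_le_one_left (Complex.normSq_nonneg _) (hc k)
    _ = 1 := sum_row_of_mem_doublyStochastic (map_normSq_mem_doublyStochastic hP) i

lemma re_trace_conjDiagonal_sub_mul_conjDiagonal_sub {V W : Matrix n n ℂ}
    (hV : V ∈ unitary (Matrix n n ℂ)) (hW : W ∈ unitary (Matrix n n ℂ)) (a b c e : n → ℝ) :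
    ((conjDiagonal V a - conjDiagonal W b) * (conjDiagonal V c - conjDiagonal W e)).trace.re =
      ∑ i, ∑ j, normSq ((star V * W) i j) * ((a i - b j) * (c i - e j)) := by
  have hm := map_normSq_mem_doublyStochastic (mul_mem (Unitary.star_mem hV) hW)
  have hac : ∑ i, a i * c i = ∑ i, ∑ j, normSq ((star V * W) i j) * (a i * c i) :=
    (sum_sum_mul_left_of_mem_doublyStochastic hm _).symm
  have hbe : ∑ j, b j * e j = ∑ i, ∑ j, normSq ((star V * W) i j) * (b j * e j) :=
    (sum_sum_mul_right_of_mem_doublyStochastic hm _).symm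
  rw [sub_mul, mul_sub, mul_sub, trace_sub, trace_sub, trace_sub, Complex.sub_re, Complex.sub_re,
    Complex.sub_re, re_trace_conjDiagonal_mul_conjDiagonal_self hV.1,
    re_trace_conjDiagonal_mul_conjDiagonal_self hW.1, trace_mul_comm (conjDiagonal W b),
    re_trace_conjDiagonal_mul_conjDiagonal, re_trace_conjDiagonal_mul_conjDiagonal, hac, hbe]
  simp only [← Finset.sum_sub_distrib]
  exact Finset.sum_congr rfl fun i _ => Finset.sum_congr rfl fun j _ => by ring

lemma IsHermitian.re_trace_mul_le {A B : Matrix n n ℂ} (hA : A.IsHermitian) (hB : B.IsHermitian) :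
    (A * B).trace.re ≤ (⨆ i, |hA.eigenvalues i|) * ∑ j, |hB.eigenvalues j| := by
  set a := hA.eigenvalues
  set b := hB.eigenvalues
  set P := star (hA.eigenvectorUnitary : Matrix n n ℂ) * hB.eigenvectorUnitary
  have hm : P.map normSq ∈ doublyStochastic ℝ n := map_normSq_mem_doublyStochastic
    (mul_mem (Unitary.star_mem hA.eigenvectorUnitary.2) hB.eigenvectorUnitary.2)
  have hab : ∀ i j, a i * b j ≤ (⨆ i, |a i|) * |b j| := fun i j =>
    (le_abs_self _).trans <| (abs_mul (a i) (b j)).trans_le <|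
      mul_le_mul_of_nonneg_right (le_ciSup (f := fun i => |a i|) (Set.finite_range _).bddAbove i)
        (abs_nonneg _)
  conv_lhs => rw [hA.eq_conjDiagonal, hB.eq_conjDiagonal]
  calc _ = ∑ i, ∑ j, a i * b j * normSq (P i j) := re_trace_conjDiagonal_mul_conjDiagonal _ _ _ _
    _ ≤ ∑ i, ∑ j, normSq (P i j) * ((⨆ i, |a i|) * |b j|) := by
        refine Finset.sum_le_sum fun i _ => Finset.sum_le_sum fun j _ => ?_
        rw [mul_comm (normSq _)]
        exact mul_le_mul_of_nonneg_right (hab i j) (Complex.normSq_nonneg _)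
    _ = (⨆ i, |a i|) * ∑ j, |b j| :=
        (sum_sum_mul_right_of_mem_doublyStochastic hm _).trans (Finset.mul_sum _ _ _).symm

lemma IsHermitian.exists_sum_abs_eigenvalues_eq_re_trace {D : Matrix n n ℂ} (hD : D.IsHermitian) :
    ∃ U ∈ unitary (Matrix n n ℂ), ∃ t : n → ℝ, (∀ k, |t k| ≤ 1) ∧
      ∑ k, |hD.eigenvalues k| = (D * conjDiagonal U t).trace.re := by
  refine ⟨_, hD.eigenvectorUnitary.2, fun k => SignType.sign (hD.eigenvalues k), fun k => ?_, ?_⟩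
  · rcases lt_trichotomy (hD.eigenvalues k) 0 with h | h | h <;> simp [h]
  · have h := re_trace_conjDiagonal_mul_conjDiagonal_self hD.eigenvectorUnitary.2.1
      hD.eigenvalues fun k => SignType.sign (hD.eigenvalues k)
    rw [← hD.eq_conjDiagonal] at h
    simp [h]

lemma re_trace_conjDiagonal_sub_mul {V W : Matrix n n ℂ} (hV : V * star V = 1)
    (hW : W * star W = 1) (p s : n → ℝ) (A : Matrix n n ℂ) :
    ((conjDiagonal V p - conjDiagonal W s) * A).trace.re =
      ∑ i, ∑ j, (conj ((star V * W) i j) * (star V * A * W) i j).re * (p i - s j) := by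
  have hVAV : star V * A * V = (star V * A * W) * star (star V * W) := by
    simp only [star_mul, star_star, Matrix.mul_assoc]
    rw [← Matrix.mul_assoc W, hW, Matrix.one_mul]
  have hWAW : star W * A * W = star (star V * W) * (star V * A * W) := by
    simp only [star_mul, star_star, Matrix.mul_assoc]
    rw [← Matrix.mul_assoc V, hV, Matrix.one_mul]
  rw [sub_mul, trace_sub, trace_conjDiagonal_mul, trace_conjDiagonal_mul, hVAV, hWAW]
  generalize star V * W = G, star V * A * W = H
  simp only [Complex.sub_re, Complex.re_sum, Complex.re_ofReal_mul, mul_apply, star_apply,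
    Finset.mul_sum]
  rw [Finset.sum_comm (f := fun j i => s j * (star (G i j) * H i j).re)]
  simp only [← Finset.sum_sub_distrib]
  refine Finset.sum_congr rfl fun i _ => Finset.sum_congr rfl fun j _ => ?_
  rw [Complex.star_def, mul_comm (H i j)]
  ring

lemma sq_re_trace_conjDiagonal_sub_mul_conjDiagonal_le {U V W : Matrix n n ℂ}
    (hU : U ∈ unitary (Matrix n n ℂ)) (hV : V ∈ unitary (Matrix n n ℂ))
    (hW : W ∈ unitary (Matrix n n ℂ)) {t : n → ℝ} (ht : ∀ k, |t k| ≤ 1) {p s : n → ℝ}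
    (hp : ∀ i, 0 < p i) (hs : ∀ j, 0 < s j) (hp1 : ∑ i, p i = 1) (hs1 : ∑ j, s j = 1) :
    ((conjDiagonal V p - conjDiagonal W s) * conjDiagonal U t).trace.re ^ 2 ≤
      2 * ∑ i, ∑ j, normSq ((star V * W) i j) * ((p i - s j) ^ 2 / (p i + s j)) := by
  set A := conjDiagonal U t
  have hA : star A = A := (isHermitian_conjDiagonal U t).eq
  have hAA : A * A = conjDiagonal U (t * t) := conjDiagonal_mul_conjDiagonal hU.1 t t
  have htt : ∀ k, (t * t) k ≤ 1 := fun k => by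
    simpa [abs_mul_abs_self] using mul_le_one₀ (ht k) (abs_nonneg _) (ht k)
  rw [re_trace_conjDiagonal_sub_mul hV.2 hW.2]
  refine sq_sum_sum_re_conj_mul_mul_sub_le hp hs hp1 hs1 (fun i => ?_) (fun j => ?_)
  · have hH : (star V * A * W) * star (star V * A * W) = star V * (A * A) * V := by
      simp only [star_mul, star_star, hA, Matrix.mul_assoc]
      rw [← Matrix.mul_assoc W, hW.2, Matrix.one_mul]
    rw [← re_mul_star_apply_self, hH, hAA, star_mul_conjDiagonal_mul]
    exact re_conjDiagonal_apply_self_le_one (mul_mem (Unitary.star_mem hV) hU) htt i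
  · have hH : star (star V * A * W) * (star V * A * W) = star W * (A * A) * W := by
      simp only [star_mul, star_star, hA, Matrix.mul_assoc]
      rw [← Matrix.mul_assoc V, hV.2, Matrix.one_mul]
    rw [← re_star_mul_apply_self, hH, hAA, star_mul_conjDiagonal_mul]
    exact re_conjDiagonal_apply_self_le_one (mul_mem (Unitary.star_mem hW) hU) htt j

/-- The symmetrised quantum Pinsker inequality `D(ρ‖σ) + D(σ‖ρ) ≥ ‖ρ - σ‖₁²` for the Gibbs
states `ρ`, `σ` of `conjDiagonal V a` and `conjDiagonal W b`. -/
lemma sq_sum_abs_eigenvalues_le_re_trace_conjDiagonal_sub_mul [Nonempty n] {V W : Matrix n n ℂ}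
    (hV : V ∈ unitary (Matrix n n ℂ)) (hW : W ∈ unitary (Matrix n n ℂ)) (a b : n → ℝ)
    {D : Matrix n n ℂ} (hD : D.IsHermitian)
    (hD_eq : D = conjDiagonal V (softmax a) - conjDiagonal W (softmax b)) :
    (∑ k, |hD.eigenvalues k|) ^ 2 ≤ ((conjDiagonal V a - conjDiagonal W b) * D).trace.re := by
  have hm := map_normSq_mem_doublyStochastic (mul_mem (Unitary.star_mem hV) hW)
  obtain ⟨U, hU, t, ht, hnorm⟩ := hD.exists_sum_abs_eigenvalues_eq_re_trace
  rw [hnorm]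
  subst hD_eq
  calc _ ≤ 2 * ∑ i, ∑ j, normSq ((star V * W) i j) *
          ((softmax a i - softmax b j) ^ 2 / (softmax a i + softmax b j)) :=
        sq_re_trace_conjDiagonal_sub_mul_conjDiagonal_le hU hV hW ht (softmax_pos a)
          (softmax_pos b) (sum_softmax a) (sum_softmax b)
    _ ≤ ∑ i, ∑ j, normSq ((star V * W) i j) * ((Real.log (softmax a i) -
          Real.log (softmax b j)) * (softmax a i - softmax b j)) := by
        simp only [Finset.mul_sum]
        refine Finset.sum_le_sum fun i _ => Finset.sum_le_sum fun j _ => ?_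
        rw [mul_left_comm]
        exact mul_le_mul_of_nonneg_left (Real.two_mul_sq_div_add_le_log_sub_mul_sub
          (softmax_pos a i) (softmax_pos b j)) (Complex.normSq_nonneg _)
    _ = ∑ i, ∑ j, normSq ((star V * W) i j) * ((a i - b j) * (softmax a i - softmax b j)) :=
        sum_sum_mul_log_softmax_sub hm a b
    _ = _ := (re_trace_conjDiagonal_sub_mul_conjDiagonal_sub hV hW _ _ _ _).symm

lemma exp_conjDiagonal {V : Matrix n n ℂ} (hV : V ∈ unitary (Matrix n n ℂ)) (a : n → ℝ) :
    NormedSpace.exp (conjDiagonal V a) = conjDiagonal V (fun i => Real.exp (a i)) := by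
  have hinv : V⁻¹ = star V := inv_eq_left_inv hV.1
  rw [conjDiagonal, ← hinv, exp_conj V _ ⟨⟨V, star V, hV.2, hV.1⟩, rfl⟩, exp_diagonal,
    hinv, conjDiagonal, Pi.exp_def]
  simp_rw [Complex.ofReal_exp, Complex.exp_eq_exp_ℂ]

end Matrix

open Matrix

lemma expMap_eq_conjDiagonal {M : ℕ} {Y : Matrix (Fin M) (Fin M) ℂ} (hY : Y.IsHermitian) :
    expMap Y = conjDiagonal hY.eigenvectorUnitary (softmax hY.eigenvalues) := by
  have hV := hY.eigenvectorUnitary.2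
  conv_lhs => rw [hY.eq_conjDiagonal]
  rw [expMap, exp_conjDiagonal hV, trace_conjDiagonal hV.1, conjDiagonal, conjDiagonal,
    ← Matrix.smul_mul, ← Matrix.mul_smul, ← diagonal_smul]
  congr 3
  funext i
  simp [softmax, div_eq_inv_mul]

theorem expMap_lipschitz_general (M : ℕ) (Y Y' : Matrix (Fin M) (Fin M) ℂ)
    (hY : Y.IsHermitian) (hY' : Y'.IsHermitian) :
    nuclearNorm (expMap Y - expMap Y') ≤ spectralNormHerm (Y - Y') := by
  rcases isEmpty_or_nonempty (Fin M) with hM | hM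
  · simp [nuclearNorm, spectralNormHerm]
  have hρσ : expMap Y - expMap Y' = conjDiagonal hY.eigenvectorUnitary (softmax hY.eigenvalues) -
      conjDiagonal hY'.eigenvectorUnitary (softmax hY'.eigenvalues) := by
    rw [expMap_eq_conjDiagonal hY, expMap_eq_conjDiagonal hY']
  have hD : (expMap Y - expMap Y').IsHermitian := hρσ ▸
    (isHermitian_conjDiagonal _ _).sub (isHermitian_conjDiagonal _ _)
  have hpinsker := sq_sum_abs_eigenvalues_le_re_trace_conjDiagonal_sub_mul
    hY.eigenvectorUnitary.2 hY'.eigenvectorUnitary.2 _ _ hD hρσ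
  rw [← hY.eq_conjDiagonal, ← hY'.eq_conjDiagonal] at hpinsker
  have hholder := (hY.sub hY').re_trace_mul_le hD
  have hS : 0 ≤ ⨆ l, |(hY.sub hY').eigenvalues l| := Real.iSup_nonneg fun _ => abs_nonneg _
  have hN : 0 ≤ ∑ k, |hD.eigenvalues k| := Finset.sum_nonneg fun _ _ => abs_nonneg _
  rw [nuclearNorm, dif_pos hD, spectralNormHerm, dif_pos (hY.sub hY')]
  nlinarith

/-- The matrix exponential mapping Q(Y) = exp(Y)/tr(exp Y) is 1-Lipschitz from the
spectral norm to the nuclear norm on traceless Hermitian matrices. -/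
theorem expMap_lipschitz (M : ℕ) (Y Y' : Matrix (Fin M) (Fin M) ℂ)
    (hY : Y.IsHermitian) (hY' : Y'.IsHermitian)
    (hYtr : Y.trace = 0) (hY'tr : Y'.trace = 0) :
    nuclearNorm (expMap Y - expMap Y') ≤ spectralNormHerm (Y - Y') :=
  expMap_lipschitz_general M Y Y' hY hY'
end

section
/- Fix δ with 0 < δ < r where r = 1/√(M(M-1)), let Q be in the spectrahedron C of unit-trace PSD Hermitian M×M matrices, and let Z be a traceless Hermitian matrix with ‖Z‖_F = 1. Then the adjusted query point Q̂ = Q + (δ/r)(I/M - Q) + δZ lies in C. -/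
/-! Write `Q̂ = (1 - δ/r) Q + δ (Z + c I)` with `c = 1/(rM) = √(M(M-1))/M`. The first summand is
positive semidefinite because `δ < r`. For the second, the eigenvalues `λ` of `Z` sum to `tr Z = 0`
and their squares sum to `‖Z‖_F² = 1`; Cauchy–Schwarz applied to the other `M - 1` eigenvalues gives
`M λᵢ² ≤ M - 1`, that is `λᵢ ≥ -c`. -/

open scoped BigOperators ComplexOrder

/-- Frobenius norm of a complex matrix. -/
noncomputable def frobNorm {M : ℕ} (Q : Matrix (Fin M) (Fin M) ℂ) : ℝ :=
  Real.sqrt (∑ i, ∑ j, ‖Q i j‖ ^ 2)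

open Matrix Finset

section

variable {𝕜 n : Type*} [RCLike 𝕜] [Fintype n]

lemma card_mul_sq_le_of_sum_eq_zero {x : n → ℝ} (hx : ∑ j, x j = 0) (i : n) :
    Fintype.card n * x i ^ 2 ≤ (Fintype.card n - 1) * ∑ j, x j ^ 2 := by
  classical
  have hsum : ∑ j ∈ univ.erase i, x j = -x i := by
    rw [Finset.sum_erase_eq_sub (mem_univ i), hx, zero_sub]
  have hsq : ∑ j ∈ univ.erase i, x j ^ 2 = ∑ j, x j ^ 2 - x i ^ 2 :=
    Finset.sum_erase_eq_sub (mem_univ i)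
  have hcard : ((univ.erase i).card : ℝ) = Fintype.card n - 1 := by
    rw [card_erase_of_mem (mem_univ i), card_univ, Nat.cast_pred (Fintype.card_pos_iff.mpr ⟨i⟩)]
  have := sq_sum_le_card_mul_sum_sq (s := univ.erase i) (f := x)
  rw [hsum, hsq, hcard, neg_sq] at this
  linarith

lemma Matrix.trace_mul_conjTranspose_self_eq_sum_norm_sq (A : Matrix n n 𝕜) :
    (A * Aᴴ).trace = ((∑ i, ∑ j, ‖A i j‖ ^ 2 : ℝ) : 𝕜) := by
  simp [trace, mul_apply, RCLike.mul_conj]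

variable [DecidableEq n] {A : Matrix n n 𝕜}

lemma Matrix.IsHermitian.trace_mul_self_eq_sum_sq_eigenvalues (hA : A.IsHermitian) :
    (A * A).trace = ((∑ i, hA.eigenvalues i ^ 2 : ℝ) : 𝕜) := by
  conv_lhs => rw [hA.spectral_theorem, ← map_mul, Unitary.conjStarAlgAut_apply, trace_mul_cycle,
    Unitary.coe_star_mul_self, one_mul, diagonal_mul_diagonal, trace_diagonal]
  simp [sq]

lemma Matrix.IsHermitian.sum_sq_eigenvalues (hA : A.IsHermitian) :
    ∑ i, hA.eigenvalues i ^ 2 = ∑ i, ∑ j, ‖A i j‖ ^ 2 := by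
  have h := hA.trace_mul_self_eq_sum_sq_eigenvalues
  nth_rw 2 [← hA.eq] at h
  rw [trace_mul_conjTranspose_self_eq_sum_norm_sq] at h
  exact_mod_cast h.symm

lemma Matrix.IsHermitian.neg_sqrt_le_card_mul_eigenvalues (hA : A.IsHermitian) (htr : A.trace = 0)
    (i : n) :
    -√(Fintype.card n * (Fintype.card n - 1) * ∑ i, ∑ j, ‖A i j‖ ^ 2) ≤
      Fintype.card n * hA.eigenvalues i := by
  have hsum : ∑ j, hA.eigenvalues j = 0 := by
    exact_mod_cast hA.trace_eq_sum_eigenvalues.symm.trans htr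
  refine neg_le_of_abs_le (Real.abs_le_sqrt ?_)
  rw [← hA.sum_sq_eigenvalues, mul_assoc, mul_pow, sq (Fintype.card n : ℝ), mul_assoc]
  exact mul_le_mul_of_nonneg_left (card_mul_sq_le_of_sum_eq_zero hsum i) (by positivity)

lemma Matrix.IsHermitian.posSemidef_add_smul_one (hA : A.IsHermitian) {c : ℝ}
    (hc : ∀ i, -c ≤ hA.eigenvalues i) : (A + (c : 𝕜) • 1).PosSemidef := by
  refine posSemidef_iff_isHermitian_and_spectrum_nonneg.mpr
    ⟨hA.add (isHermitian_one.smul (RCLike.conj_ofReal c)), ?_⟩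
  rw [← Algebra.algebraMap_eq_smul_one, ← spectrum.add_singleton_eq, hA.spectrum_eq_image_range]
  rintro _ ⟨_, ⟨_, ⟨i, rfl⟩, rfl⟩, _, rfl, rfl⟩
  simp only [Set.mem_ofPred_eq, ← RCLike.ofReal_add, RCLike.ofReal_nonneg]
  linarith [hc i]

end

/-- The adjusted query point Q̂ = Q + (δ/r)(I/M - Q) + δ Z stays in the spectrahedron
for 0 < δ < r = 1/√(M(M-1)), any Q in the spectrahedron, and any traceless Hermitian Z
with unit Frobenius norm. -/
theorem adjusted_query_point_feasible (M : ℕ) (hM : 2 ≤ M)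
    (Q Z : Matrix (Fin M) (Fin M) ℂ)
    (hQ : Q.PosSemidef) (hQtr : Q.trace = 1)
    (hZ : Z.IsHermitian) (hZtr : Z.trace = 0) (hZnorm : frobNorm Z = 1)
    (δ : ℝ) (hδ0 : 0 < δ)
    (hδr : δ < 1 / Real.sqrt ((M : ℝ) * ((M : ℝ) - 1))) :
    let r : ℝ := 1 / Real.sqrt ((M : ℝ) * ((M : ℝ) - 1))
    let Qhat : Matrix (Fin M) (Fin M) ℂ :=
      Q + (δ / r) • (((M : ℂ))⁻¹ • (1 : Matrix (Fin M) (Fin M) ℂ) - Q) + δ • Z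
    Qhat.PosSemidef ∧ Qhat.trace = 1 := by
  intro r Qhat
  have hM0 : (0 : ℝ) < M := Nat.cast_pos.mpr (by omega)
  set s := √((M : ℝ) * (M - 1))
  have hZ_eigenvalues (i : Fin M) : -(s / M) ≤ hZ.eigenvalues i := by
    have := hZ.neg_sqrt_le_card_mul_eigenvalues hZtr i
    rw [Real.sqrt_eq_one.mp hZnorm, Fintype.card_fin, mul_one] at this
    rw [← neg_div, div_le_iff₀ hM0]
    linarith
  have hZ_shift : (Z + ((s / M : ℝ) : ℂ) • 1).PosSemidef :=
    hZ.posSemidef_add_smul_one hZ_eigenvalues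
  have hQhat : Qhat = (1 - δ / r) • Q + δ • (Z + ((s / M : ℝ) : ℂ) • 1) := by
    have hδr_eq : δ / r = δ * s := by rw [show r = 1 / s from rfl, div_div_eq_mul_div, div_one]
    simp only [Qhat, hδr_eq]
    module
  have hweight : 0 ≤ 1 - δ / r := sub_nonneg.mpr ((div_le_one (hδ0.trans hδr)).mpr hδr.le)
  constructor
  · rw [hQhat]
    exact (hQ.smul hweight).add (hZ_shift.smul hδ0.le)
  · have hMC : (M : ℂ) ≠ 0 := by exact_mod_cast hM0.ne'
    simp [Qhat, trace_add, trace_smul, trace_sub, hQtr, hZtr, hMC]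
end

section
/- Let a, b, c, h > 0 and d ≥ 0, let Γ = {(γ, δ) : γ > 0, δ > 0, γ < hδ}, and define f(γ, δ) = a/γ + 2bδ + cγ·(h - γ/δ)^{-2} + d·(h - γ/δ)^{-1} on Γ. Then at the point (γ*, δ*) with γ* = h·[√(c/a) + √( √(c/a)·(2bh)/(2√(ac)+d) )]^{-1} and δ* = √( √(a/c)·(2√(ac)+d)/(2bh) ), the value of f is f(γ*, δ*) = (2√(ac)+d)/h + 2√( 2b·√(a/c)·(2√(ac)+d)/h ). -/
/-! For fixed `δ`, put `s = √(c/a)`, `u = h - γ/δ` and take `γ = h/(s + δ⁻¹)`, the point where the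
two `γ`-terms `a/γ` and `cγ/u²` are equal. Along this curve, with `K = 2√(ac) + d`, the cost reduces
to `K/h + K/(h s δ) + 2bδ`. The given `δ*` is the AM–GM balance point of the last two terms, where
each of them equals `2bδ*`, and that is the closed form. -/

open Real

noncomputable def policyCost (a b c d h γ δ : ℝ) : ℝ :=
  a / γ + 2 * b * δ + c * γ / (h - γ / δ) ^ 2 + d / (h - γ / δ)

lemma div_add_inv_pos_and_lt_mul {h s δ : ℝ} (hh : 0 < h) (hs : 0 < s) (hδ : 0 < δ) :
    0 < h / (s + δ⁻¹) ∧ h / (s + δ⁻¹) < h * δ := by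
  refine ⟨by positivity, ?_⟩
  rw [div_lt_iff₀ (by positivity), mul_add, mul_inv_cancel_right₀ hδ.ne']
  nlinarith [mul_pos (mul_pos hh hδ) hs]

lemma policyCost_on_balanced_curve (a b d : ℝ) {h s δ : ℝ} (hh : h ≠ 0) (hs : 0 < s) (hδ : 0 < δ) :
    policyCost a b (a * s ^ 2) d h (h / (s + δ⁻¹)) δ
      = (2 * (a * s) + d) / h * (1 + (s * δ)⁻¹) + 2 * b * δ := by
  have : s * δ + 1 ≠ 0 := by positivity
  unfold policyCost
  field_simp
  ring

lemma reducedCost_at_balance_point {b h s K : ℝ} (hb : 0 < b) (hh : 0 < h) (hs : 0 < s)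
    (hK : 0 < K) :
    let δ := √(s⁻¹ * K / (2 * b * h))
    K / h * (1 + (s * δ)⁻¹) + 2 * b * δ = K / h + 2 * √(2 * b * s⁻¹ * (K / h)) := by
  intro δ
  have hδ_sq : δ ^ 2 = s⁻¹ * K / (2 * b * h) := sq_sqrt (by positivity)
  have h_rhs : √(2 * b * s⁻¹ * (K / h)) = 2 * b * δ := by
    rw [← sqrt_sq (by positivity : 0 ≤ 2 * b * δ), mul_pow, hδ_sq]
    congr 1
    field_simp
  have h_balance : K / h * (s * δ)⁻¹ = 2 * b * δ := by
    have hK_eq : K = 2 * b * h * s * δ ^ 2 := by rw [hδ_sq]; field_simp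
    rw [hK_eq]
    field_simp
  rw [mul_one_add, h_balance, h_rhs]
  ring

/-- Closed-form value of `f(γ,δ) = a/γ + 2bδ + cγ(h-γ/δ)⁻² + d(h-γ/δ)⁻¹` at the optimizer
`(γ*, δ*)` on the cone `Γ = {(γ,δ) : γ > 0, δ > 0, γ < hδ}`. -/
theorem optimal_policy_value (a b c h d : ℝ) (ha : 0 < a) (hb : 0 < b) (hc : 0 < c)
    (hh : 0 < h) (hd : 0 ≤ d) :
    let γs : ℝ := h * (Real.sqrt (c / a) +
      Real.sqrt (Real.sqrt (c / a) * (2 * b * h) / (2 * Real.sqrt (a * c) + d)))⁻¹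
    let δs : ℝ := Real.sqrt (Real.sqrt (a / c) * (2 * Real.sqrt (a * c) + d) / (2 * b * h))
    (0 < γs ∧ 0 < δs ∧ γs < h * δs) ∧
    a / γs + 2 * b * δs + c * γs / (h - γs / δs) ^ 2 + d / (h - γs / δs)
      = (2 * Real.sqrt (a * c) + d) / h +
        2 * Real.sqrt (2 * b * Real.sqrt (a / c) * ((2 * Real.sqrt (a * c) + d) / h)) := by
  obtain ⟨s, hs, rfl⟩ : ∃ s, 0 < s ∧ c = a * s ^ 2 :=
    ⟨√(c / a), by positivity, by rw [sq_sqrt (by positivity)]; field_simp⟩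
  have h_ca : √(a * s ^ 2 / a) = s := by rw [mul_div_cancel_left₀ _ ha.ne', sqrt_sq hs.le]
  have h_ac : √(a * (a * s ^ 2)) = a * s := by
    rw [← mul_assoc, ← sq, ← mul_pow, sqrt_sq (by positivity)]
  have h_ac' : √(a / (a * s ^ 2)) = s⁻¹ := by
    rw [div_mul_cancel_left₀ ha.ne', sqrt_inv, sqrt_sq hs.le]
  simp only [h_ca, h_ac, h_ac']
  set K := 2 * (a * s) + d
  have hK : 0 < K := by positivity
  set δ := √(s⁻¹ * K / (2 * b * h)) with hδ_def
  have hδ : 0 < δ := by positivity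
  have h_inv : √(s * (2 * b * h) / K) = δ⁻¹ := by
    rw [hδ_def, ← sqrt_inv]
    congr 1
    field_simp
  rw [h_inv, ← div_eq_mul_inv]
  obtain ⟨hγ, hlt⟩ := div_add_inv_pos_and_lt_mul hh hs hδ
  refine ⟨⟨hγ, hδ, hlt⟩, ?_⟩
  change policyCost a b (a * s ^ 2) d h (h / (s + δ⁻¹)) δ = _
  rw [policyCost_on_balanced_curve a b d hh.ne' hs hδ]
  exact reducedCost_at_balance_point hb hh hs hK
end
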